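/- arXiv:2411.03393 — 4 statements merged into one kernel-verified Lean document; each statement's English description precedes it below -/
import Mathlib

section
/- Let Σ be a δ-approximately (d_X, d_Y)-biregular bipartite graph with parts X and Y, where d_Y ≤ d_X. Suppose (F,S) ∈ 2^Y × 2^X is a (ψ_X, ψ_Y)-approximating pair for a set A ⊆ X with |[A]| = a and |N(A)| = g, where F ⊆ N(A). Then, writing s = |S| and f = |F|, we have s·d_X ≤ f·d_Y + (g-f)·ψ_Y + (s-a)·ψ_X; in particular s ≤ f + (1/d_X)·[(g-f)·ψ_Y + (s-a)·ψ_X]. -/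
open Finset

/-- The neighbourhood `N(A)` of a set of vertices. -/
def nbhd {V : Type*} [Fintype V] [DecidableEq V] (G : SimpleGraph V)
    [DecidableRel G.Adj] (A : Finset V) : Finset V :=
  A.biUnion fun x => G.neighborFinset x

/-- The closure `[A] = {x ∈ X : N(x) ⊆ N(A)}`. -/
def closure' {V : Type*} [Fintype V] [DecidableEq V] (G : SimpleGraph V)
    [DecidableRel G.Adj] (X A : Finset V) : Finset V :=
  X.filter fun x => G.neighborFinset x ⊆ nbhd G A

/-!
Double count the edges leaving `S`. Every `u ∈ S` sends all but `ψ_X` of its at least `d_X` edges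
into `F`, and a vertex of the closure `[A]` sends all of them into `N(A)`. Seen from the other side,
a vertex of `F` receives at most `d_Y` edges from `S`, and a vertex of `N(A) \ F ⊆ Y \ F` at most
`ψ_Y`, since all but `ψ_Y` of its edges go to `X \ S`. Only the `s - a` vertices of `S \ [A]` may
lose edges outside `N(A)`, whence the term `(s - a)·ψ_X`.
-/

namespace SimpleGraph

variable {V : Type*} [Fintype V] [DecidableEq V] (G : SimpleGraph V) [DecidableRel G.Adj]

theorem sum_card_neighborFinset_inter_comm (P Q : Finset V) :
    ∑ u ∈ P, #(G.neighborFinset u ∩ Q) = ∑ v ∈ Q, #(G.neighborFinset v ∩ P) := by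
  convert sum_card_bipartiteAbove_eq_sum_card_bipartiteBelow (s := P) (t := Q) G.Adj
    using 3
  · ext; simp [bipartiteAbove, and_comm]
  · ext; simp [bipartiteBelow, and_comm, G.adj_comm]

theorem card_neighborFinset_inter_add_card_neighborFinset_inter_sdiff_le (v : V)
    (S X : Finset V) :
    #(G.neighborFinset v ∩ S) + #(G.neighborFinset v ∩ (X \ S)) ≤ G.degree v := by
  rw [← card_neighborFinset_eq_degree, ← card_inter_add_card_sdiff (G.neighborFinset v) S]
  gcongr
  rw [← inter_sdiff_assoc]
  exact sdiff_subset_sdiff inter_subset_left subset_rfl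

theorem degree_eq_card_inter_add_card_inter_sdiff {u : V} {B : Finset V}
    (hB : G.neighborFinset u ⊆ B) (F : Finset V) :
    G.degree u = #(G.neighborFinset u ∩ F) + #(G.neighborFinset u ∩ (B \ F)) := by
  rw [← card_neighborFinset_eq_degree, ← card_inter_add_card_sdiff (G.neighborFinset u) F,
    ← inter_sdiff_assoc, inter_eq_left.2 hB]

theorem nbhd_subset_of_bipartite {X Y A : Finset V} (hdisj : Disjoint X Y)
    (hbip : ∀ u v : V, G.Adj u v → (u ∈ X ∧ v ∈ Y) ∨ (u ∈ Y ∧ v ∈ X)) (hA : A ⊆ X) :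
    nbhd G A ⊆ Y := by
  intro v hv
  obtain ⟨x, hxA, hxv⟩ := mem_biUnion.1 hv
  rcases hbip x v ((mem_neighborFinset G x v).1 hxv) with ⟨_, hvY⟩ | ⟨hxY, _⟩
  · exact hvY
  · exact absurd hxY (Finset.disjoint_left.1 hdisj (hA hxA))

theorem sum_degree_le_of_forall_degree_sub_le {S C F B : Finset V} {ψ : ℝ} (hCS : C ⊆ S)
    (hCB : ∀ u ∈ C, G.neighborFinset u ⊆ B)
    (hS : ∀ u ∈ S, (G.degree u : ℝ) - ψ ≤ #(G.neighborFinset u ∩ F)) :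
    ∑ u ∈ S, (G.degree u : ℝ) ≤ ∑ v ∈ F, (#(G.neighborFinset v ∩ S) : ℝ)
      + ∑ v ∈ B \ F, (#(G.neighborFinset v ∩ S) : ℝ) + #(S \ C) * ψ := by
  have hdeg_C : ∑ u ∈ C, (G.degree u : ℝ) = ∑ u ∈ C, (#(G.neighborFinset u ∩ F) : ℝ)
      + ∑ u ∈ C, (#(G.neighborFinset u ∩ (B \ F)) : ℝ) := by
    rw [← sum_add_distrib]
    exact sum_congr rfl fun u hu =>
      mod_cast G.degree_eq_card_inter_add_card_inter_sdiff (hCB u hu) F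
  have hdeg_SC : ∑ u ∈ S \ C, (G.degree u : ℝ)
      ≤ ∑ u ∈ S \ C, (#(G.neighborFinset u ∩ F) : ℝ) + #(S \ C) * ψ := by
    rw [← nsmul_eq_mul, ← sum_const, ← sum_add_distrib]
    exact sum_le_sum fun u hu => by linarith [hS u (mem_sdiff.1 hu).1]
  have hF : ∑ u ∈ S, (#(G.neighborFinset u ∩ F) : ℝ)
      = ∑ v ∈ F, (#(G.neighborFinset v ∩ S) : ℝ) :=
    mod_cast G.sum_card_neighborFinset_inter_comm S F
  have hBF : ∑ u ∈ C, (#(G.neighborFinset u ∩ (B \ F)) : ℝ)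
      ≤ ∑ v ∈ B \ F, (#(G.neighborFinset v ∩ S) : ℝ) := by
    rw [← Nat.cast_sum, G.sum_card_neighborFinset_inter_comm, ← Nat.cast_sum]
    exact_mod_cast sum_le_sum fun v _ => card_le_card (inter_subset_inter_left hCS)
  rw [← sum_sdiff hCS] at hF ⊢
  linarith

end SimpleGraph

theorem stmt_3_general {V : Type*} [Fintype V] [DecidableEq V] (G : SimpleGraph V)
    [DecidableRel G.Adj] (X Y : Finset V) (δ dX dY ψX ψY : ℝ)
    (hdX : 0 < dX) (hdYX : dY ≤ dX)
    (hdisj : Disjoint X Y)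
    (hbip : ∀ u v : V, G.Adj u v → (u ∈ X ∧ v ∈ Y) ∨ (u ∈ Y ∧ v ∈ X))
    (hdegX : ∀ x ∈ X, dX ≤ (G.degree x : ℝ) ∧ (G.degree x : ℝ) ≤ δ * dX)
    (hdegY : ∀ y ∈ Y, δ⁻¹ * dY ≤ (G.degree y : ℝ) ∧ (G.degree y : ℝ) ≤ dY)
    (A F S : Finset V) (hA : A ⊆ X) (hFY : F ⊆ Y) (hSX : S ⊆ X)
    (a g s f : ℕ)
    (ha : (closure' G X A).card = a) (hg : (nbhd G A).card = g)
    (hs : S.card = s) (hf : F.card = f)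
    (hFN : F ⊆ nbhd G A) (hScl : closure' G X A ⊆ S)
    (hSdeg : ∀ u ∈ S, (G.degree u : ℝ) - ψX ≤ ((G.neighborFinset u ∩ F).card : ℝ))
    (hFdeg : ∀ v ∈ Y \ F,
      (G.degree v : ℝ) - ψY ≤ ((G.neighborFinset v ∩ (X \ S)).card : ℝ)) :
    (s : ℝ) * dX ≤ (f : ℝ) * dY + ((g : ℝ) - f) * ψY + ((s : ℝ) - a) * ψX ∧
      (s : ℝ) ≤ (f : ℝ) + (1 / dX) * (((g : ℝ) - f) * ψY + ((s : ℝ) - a) * ψX) := by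
  have hsum := G.sum_degree_le_of_forall_degree_sub_le hScl
    (fun u hu => (mem_filter.1 hu).2) hSdeg (B := nbhd G A)
  have hlow : (s : ℝ) * dX ≤ ∑ u ∈ S, (G.degree u : ℝ) := by
    simpa [hs] using card_nsmul_le_sum S _ dX fun u hu => (hdegX u (hSX hu)).1
  have hF : ∑ v ∈ F, (#(G.neighborFinset v ∩ S) : ℝ) ≤ f * dY := by
    simpa [hf] using sum_le_card_nsmul F _ dY fun v hv =>
      (Nat.cast_le.2 (card_le_card inter_subset_left)).trans (hdegY v (hFY hv)).2
  have hBF : ∑ v ∈ nbhd G A \ F, (#(G.neighborFinset v ∩ S) : ℝ) ≤ (g - f) * ψY := by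
    have hcard : (#(nbhd G A \ F) : ℝ) = g - f := by
      rw [card_sdiff_of_subset hFN, Nat.cast_sub (card_le_card hFN), hg, hf]
    rw [← hcard, ← nsmul_eq_mul]
    refine sum_le_card_nsmul _ _ _ fun v hv => ?_
    have hvY := G.nbhd_subset_of_bipartite hdisj hbip hA (mem_sdiff.1 hv).1
    have hsplit :
        (#(G.neighborFinset v ∩ S) : ℝ) + #(G.neighborFinset v ∩ (X \ S)) ≤ G.degree v :=
      mod_cast G.card_neighborFinset_inter_add_card_neighborFinset_inter_sdiff_le v S X
    linarith [hFdeg v (mem_sdiff.2 ⟨hvY, (mem_sdiff.1 hv).2⟩)]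
  have hSC : (#(S \ closure' G X A) : ℝ) = s - a := by
    rw [card_sdiff_of_subset hScl, Nat.cast_sub (card_le_card hScl), hs, ha]
  have hmain : (s : ℝ) * dX ≤ f * dY + (g - f) * ψY + (s - a) * ψX := by
    rw [hSC] at hsum
    linarith
  refine ⟨hmain, ?_⟩
  have hfdY : (f : ℝ) * dY ≤ f * dX := mul_le_mul_of_nonneg_left hdYX f.cast_nonneg
  rw [one_div, inv_mul_eq_div, ← sub_le_iff_le_add', le_div_iff₀ hdX]
  linarith

/-- If `(F,S)` is a `(ψ_X, ψ_Y)`-approximating pair for `A ⊆ X` in a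
`δ`-approximately `(d_X,d_Y)`-biregular bipartite graph `Σ = X ⊔ Y`, then with
`s = |S|`, `f = |F|`, `a = |[A]|`, `g = |N(A)|`, we have
`s·d_X ≤ f·d_Y + (g-f)·ψ_Y + (s-a)·ψ_X`, and in particular
`s ≤ f + (1/d_X)·[(g-f)·ψ_Y + (s-a)·ψ_X]`. -/
theorem stmt_3 {V : Type*} [Fintype V] [DecidableEq V] (G : SimpleGraph V)
    [DecidableRel G.Adj] (X Y : Finset V) (δ dX dY ψX ψY : ℝ)
    (hδ : 1 ≤ δ) (hdX : 0 < dX) (hdYX : dY ≤ dX)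
    (hdisj : Disjoint X Y) (hcover : ∀ v : V, v ∈ X ∨ v ∈ Y)
    (hbip : ∀ u v : V, G.Adj u v → (u ∈ X ∧ v ∈ Y) ∨ (u ∈ Y ∧ v ∈ X))
    (hdegX : ∀ x ∈ X, dX ≤ (G.degree x : ℝ) ∧ (G.degree x : ℝ) ≤ δ * dX)
    (hdegY : ∀ y ∈ Y, δ⁻¹ * dY ≤ (G.degree y : ℝ) ∧ (G.degree y : ℝ) ≤ dY)
    (A F S : Finset V) (hA : A ⊆ X) (hFY : F ⊆ Y) (hSX : S ⊆ X)
    (a g s f : ℕ)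
    (ha : (closure' G X A).card = a) (hg : (nbhd G A).card = g)
    (hs : S.card = s) (hf : F.card = f)
    (hFN : F ⊆ nbhd G A) (hScl : closure' G X A ⊆ S)
    (hSdeg : ∀ u ∈ S, (G.degree u : ℝ) - ψX ≤ ((G.neighborFinset u ∩ F).card : ℝ))
    (hFdeg : ∀ v ∈ Y \ F,
      (G.degree v : ℝ) - ψY ≤ ((G.neighborFinset v ∩ (X \ S)).card : ℝ)) :
    (s : ℝ) * dX ≤ (f : ℝ) * dY + ((g : ℝ) - f) * ψY + ((s : ℝ) - a) * ψX ∧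
      (s : ℝ) ≤ (f : ℝ) + (1 / dX) * (((g : ℝ) - f) * ψY + ((s : ℝ) - a) * ψX) :=
  stmt_3_general G X Y δ dX dY ψX ψY hdX hdYX hdisj hbip hdegX hdegY A F S hA hFY hSX a g s f ha hg
    hs hf hFN hScl hSdeg hFdeg
end

section
/- Lovász–Stein covering lemma: Let G be a finite bipartite graph with parts P and Q such that every vertex in P has degree at least a > 0 and every vertex in Q has degree at most b ≥ 1. Then there exists Q' ⊆ Q covering P (i.e., every vertex of P has a neighbour in Q') with |Q'| ≤ (|Q|/a)·(1 + log b). -/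
/-!
Greedy covering with a harmonic potential. For `s ⊆ P` still to be covered, put
`Φ(s) = ∑_{q ∈ Q} H(|N(q) ∩ s|)`, with `H` the harmonic numbers. Choosing `q₀` with
`|N(q₀) ∩ s| = k` maximal and removing `S = N(q₀) ∩ s` lowers each summand by at least
`|N(q) ∩ S| / k` (as `H(m + d) - H(m) ≥ d / k` whenever `m + d ≤ k`), hence lowers `Φ` by
at least `(∑_{u ∈ S} deg u) / k ≥ a`. So the greedy cover has at most `Φ(P) / a` vertices,
and `Φ(P) ≤ |Q| (1 + log b)` since `H(n) ≤ 1 + log n`.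
-/

open Finset

lemma div_le_harmonic_add_sub_harmonic {m d k : ℕ} (hk : m + d ≤ k) :
    (d / k : ℚ) ≤ harmonic (m + d) - harmonic m := by
  rw [harmonic, harmonic, ← sum_Ico_eq_sub _ (m.le_add_right d), div_eq_mul_inv]
  calc (d : ℚ) * (k : ℚ)⁻¹ = #(Ico m (m + d)) • (k : ℚ)⁻¹ := by simp
    _ ≤ _ := card_nsmul_le_sum _ _ _ fun i hi => inv_anti₀ (by positivity) (by
          exact_mod_cast (mem_Ico.mp hi).2.trans_le hk)

lemma harmonic_le_one_add_log_of_le {n : ℕ} {x : ℝ} (hx : 1 ≤ x) (hn : n ≤ x) :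
    harmonic n ≤ 1 + Real.log x := by
  rcases n.eq_zero_or_pos with rfl | hpos
  · simp only [harmonic_zero, Rat.cast_zero]
    linarith [Real.log_nonneg hx]
  · exact (harmonic_le_one_add_log n).trans (by gcongr)

section Cover

variable {α β : Type*} (r : α → β → Prop) [∀ x y, Decidable (r x y)] (t : Finset β)

noncomputable def coverPotential (s : Finset α) : ℝ :=
  ∑ y ∈ t, (harmonic #(s.bipartiteBelow r y) : ℝ)

variable {r t}

lemma card_bipartiteBelow_eq_add (s : Finset α) (y₀ y : β) :
    #(s.bipartiteBelow r y) =
      #({x ∈ s | ¬ r x y₀}.bipartiteBelow r y) + #((s.bipartiteBelow r y₀).bipartiteBelow r y) := by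
  rw [← card_filter_add_card_filter_not (s := s.bipartiteBelow r y) (r · y₀), add_comm]
  congr 2 <;> ext x <;> simp only [bipartiteBelow, mem_filter] <;> tauto

lemma add_coverPotential_le {s : Finset α} {y₀ : β} {c : ℝ}
    (hne : (s.bipartiteBelow r y₀).Nonempty)
    (hmax : ∀ y ∈ t, #(s.bipartiteBelow r y) ≤ #(s.bipartiteBelow r y₀))
    (hmult : ∀ x ∈ s, c ≤ #(t.bipartiteAbove r x)) :
    c + coverPotential r t {x ∈ s | ¬ r x y₀} ≤ coverPotential r t s := by
  set S := s.bipartiteBelow r y₀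
  have hk : (0 : ℝ) < #S := by exact_mod_cast hne.card_pos
  have hdrop : ∀ y ∈ t, (#(S.bipartiteBelow r y) : ℝ) / #S ≤
      harmonic #(s.bipartiteBelow r y) - harmonic #({x ∈ s | ¬ r x y₀}.bipartiteBelow r y) := by
    intro y hy
    have hsplit := card_bipartiteBelow_eq_add s y₀ y (r := r)
    have hle := hmax y hy
    rw [hsplit] at hle ⊢
    simpa using (Rat.cast_le (K := ℝ)).mpr (div_le_harmonic_add_sub_harmonic hle)
  have hcount : c * #S ≤ ∑ y ∈ t, (#(S.bipartiteBelow r y) : ℝ) := by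
    rw [← Nat.cast_sum, ← sum_card_bipartiteAbove_eq_sum_card_bipartiteBelow, Nat.cast_sum,
      mul_comm, ← nsmul_eq_mul]
    exact card_nsmul_le_sum _ _ _ fun x hx => hmult x (filter_subset _ _ hx)
  suffices c ≤ coverPotential r t s - coverPotential r t {x ∈ s | ¬ r x y₀} by linarith
  calc c ≤ ∑ y ∈ t, (#(S.bipartiteBelow r y) : ℝ) / #S := by
        rw [← sum_div, le_div_iff₀ hk]; exact hcount
    _ ≤ _ := by
        rw [coverPotential, coverPotential, ← sum_sub_distrib]; exact sum_le_sum hdrop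

lemma exists_cover_mul_card_le_coverPotential [DecidableEq β] {c : ℝ} (hc : 0 < c) (s : Finset α)
    (hmult : ∀ x ∈ s, c ≤ #(t.bipartiteAbove r x)) :
    ∃ t' ⊆ t, (∀ x ∈ s, ∃ y ∈ t', r x y) ∧ c * #t' ≤ coverPotential r t s := by
  induction s using Finset.strongInduction with
  | _ s ih =>
  rcases s.eq_empty_or_nonempty with rfl | ⟨x₀, hx₀⟩
  · exact ⟨∅, empty_subset _, by simp, by simp [coverPotential, bipartiteBelow]⟩
  obtain ⟨y₁, hy₁⟩ : (t.bipartiteAbove r x₀).Nonempty := by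
    rw [← card_pos]; exact_mod_cast hc.trans_le (hmult x₀ hx₀)
  rw [mem_bipartiteAbove] at hy₁
  obtain ⟨y₀, hy₀, hmax⟩ := exists_max_image t (fun y => #(s.bipartiteBelow r y)) ⟨y₁, hy₁.1⟩
  have hne : (s.bipartiteBelow r y₀).Nonempty := by
    rw [← card_pos]
    refine (card_pos.mpr ⟨x₀, ?_⟩).trans_le (hmax y₁ hy₁.1)
    exact (mem_bipartiteBelow r).mpr ⟨hx₀, hy₁.2⟩
  have hssub : {x ∈ s | ¬ r x y₀} ⊂ s := by
    obtain ⟨x₁, hx₁⟩ := hne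
    rw [mem_bipartiteBelow] at hx₁
    exact filter_ssubset.mpr ⟨x₁, hx₁.1, not_not.mpr hx₁.2⟩
  obtain ⟨t', ht't, hcov, hcard⟩ :=
    ih _ hssub fun x hx => hmult x (filter_subset _ _ hx)
  refine ⟨insert y₀ t', insert_subset hy₀ ht't, fun x hx => ?_, ?_⟩
  · by_cases hxy : r x y₀
    · exact ⟨y₀, mem_insert_self _ _, hxy⟩
    · obtain ⟨y, hy, hxy⟩ := hcov x (mem_filter.mpr ⟨hx, hxy⟩)
      exact ⟨y, mem_insert_of_mem hy, hxy⟩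
  · calc c * #(insert y₀ t') ≤ c * (#t' + 1) := by
          gcongr; exact_mod_cast card_insert_le _ _
      _ ≤ coverPotential r t s := by
          linarith [add_coverPotential_le hne hmax hmult]

lemma coverPotential_le {s : Finset α} {x : ℝ} (hx : 1 ≤ x)
    (h : ∀ y ∈ t, #(s.bipartiteBelow r y) ≤ x) :
    coverPotential r t s ≤ #t * (1 + Real.log x) := by
  rw [coverPotential, ← nsmul_eq_mul]
  exact sum_le_card_nsmul _ _ _ fun y hy => harmonic_le_one_add_log_of_le hx (h y hy)

end Cover

/-- Lovász–Stein covering lemma: in a finite bipartite graph with parts `P`, `Q`,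
if every vertex of `P` has degree at least `a > 0` and every vertex of `Q` has
degree at most `b ≥ 1`, then there is `Q' ⊆ Q` covering `P` with
`|Q'| ≤ (|Q|/a)·(1 + log b)`. -/
theorem stmt_7 {V : Type*} [Fintype V] [DecidableEq V] (G : SimpleGraph V)
    [DecidableRel G.Adj] (P Q : Finset V) (a b : ℝ)
    (ha : 0 < a) (hb : 1 ≤ b)
    (hdisj : Disjoint P Q)
    (hbip : ∀ u v : V, G.Adj u v → (u ∈ P ∧ v ∈ Q) ∨ (u ∈ Q ∧ v ∈ P))
    (hdegP : ∀ u ∈ P, a ≤ (G.degree u : ℝ))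
    (hdegQ : ∀ v ∈ Q, (G.degree v : ℝ) ≤ b) :
    ∃ Q' ⊆ Q, (∀ u ∈ P, ∃ v ∈ Q', G.Adj u v) ∧
      (Q'.card : ℝ) ≤ ((Q.card : ℝ) / a) * (1 + Real.log b) := by
  have hnbrP : ∀ u ∈ P, Q.bipartiteAbove G.Adj u = G.neighborFinset u := by
    intro u hu
    ext v
    simp only [mem_bipartiteAbove, SimpleGraph.mem_neighborFinset, and_iff_right_iff_imp]
    intro huv
    rcases hbip u v huv with ⟨-, hv⟩ | ⟨huQ, -⟩
    · exact hv
    · exact absurd huQ (disjoint_left.mp hdisj hu)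
  obtain ⟨Q', hQ'Q, hcov, hcard⟩ := exists_cover_mul_card_le_coverPotential ha P fun u hu => by
    rw [hnbrP u hu, SimpleGraph.card_neighborFinset_eq_degree]
    exact hdegP u hu
  have hpot : coverPotential G.Adj Q P ≤ #Q * (1 + Real.log b) := by
    refine coverPotential_le hb fun v hv => le_trans ?_ (hdegQ v hv)
    exact_mod_cast card_le_card fun u hu =>
      (G.mem_neighborFinset v u).mpr ((mem_bipartiteBelow G.Adj).mp hu).2.symm
  refine ⟨Q', hQ'Q, hcov, ?_⟩
  rw [div_mul_eq_mul_div, le_div_iff₀ ha]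
  linarith
end

section
/- In a finite graph G with maximum degree Δ ≥ 1, the number of connected subsets of vertices of size ℓ containing a fixed vertex v is at most (e·Δ)^{ℓ−1}. -/
/-!
Explore a connected set `S ∋ v` of size `ℓ` greedily: starting from `u 0 = v`, each step adds
the unexplored vertex of `S` reached through the smallest *slot* `Δ * i + r` (the `r`-th
neighbour of the `i`-th explored vertex). Slots chosen at later steps are strictly larger, and
the `j`-th one is `< Δ * j`, so the slots form an `(ℓ - 1)`-subset of `[0, Δ (ℓ - 1))`. Reading
the slots in increasing order rebuilds the exploration, hence `S`; so there are at most
`C(Δ (ℓ - 1), ℓ - 1) ≤ (e Δ)^(ℓ - 1)` such sets.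
-/

open Finset

theorem StrictMonoOn.eqOn_of_image_eq {α β : Type*} [LinearOrder α] [WellFoundedLT α]
    [Preorder β] {f g : α → β} {A : Set α} (hf : StrictMonoOn f A) (hg : StrictMonoOn g A)
    (h : f '' A = g '' A) : A.EqOn f g := by
  have key := (hf.domRestrict.range_inj hg.domRestrict).1 (by
    simpa only [Set.range_domRestrict] using h)
  exact fun x hx => congrFun key ⟨x, hx⟩

namespace SimpleGraph

theorem exists_adj_of_induce_connected {V : Type*} {G : SimpleGraph V} {S T : Set V}
    (hS : (G.induce S).Connected) (hTS : T ⊆ S) {a b : V} (ha : a ∈ T) (hb : b ∈ S) (hbT : b ∉ T) :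
    ∃ x ∈ T, ∃ y ∈ S, y ∉ T ∧ G.Adj x y := by
  obtain ⟨p⟩ := hS.preconnected ⟨a, hTS ha⟩ ⟨b, hb⟩
  obtain ⟨d, -, hd, hd'⟩ := p.exists_boundary_dart {x : S | (x : V) ∈ T} ha hbT
  exact ⟨d.fst, hd, d.snd, d.snd.2, hd', d.adj⟩

variable {V : Type*} (G : SimpleGraph V) [G.LocallyFinite]

/-- The slot `Δ * i + r` (with `r < Δ`) names the `r`-th neighbour of `u i` in a fixed
enumeration; `none` if `u i` has at most `r` neighbours. -/
noncomputable def slotTarget (Δ : ℕ) (u : ℕ → V) (t : ℕ) : Option V :=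
  (G.neighborFinset (u (t / Δ))).toList[t % Δ]?

variable {G}

theorem exists_slotTarget_eq_some {Δ : ℕ} (hdeg : ∀ x, G.degree x ≤ Δ) {u : ℕ → V} {i : ℕ}
    {w : V} (h : G.Adj (u i) w) : ∃ t < Δ * (i + 1), G.slotTarget Δ u t = some w := by
  classical
  set l := (G.neighborFinset (u i)).toList
  have hw : w ∈ l := by simpa [l] using h
  have hr : l.idxOf w < Δ := by
    have := List.idxOf_lt_length_iff.2 hw
    rw [Finset.length_toList, card_neighborFinset_eq_degree] at this
    exact this.trans_le (hdeg _)
  have hΔ : 0 < Δ := by omega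
  refine ⟨Δ * i + l.idxOf w, by rw [mul_add_one]; omega, ?_⟩
  rw [slotTarget, Nat.mul_add_div hΔ, Nat.div_eq_of_lt hr, add_zero, Nat.mul_add_mod,
    Nat.mod_eq_of_lt hr]
  exact List.getElem?_idxOf hw

theorem slotTarget_update_of_lt {Δ k t : ℕ} (u : ℕ → V) (w : V) (ht : t < Δ * k) :
    G.slotTarget Δ (Function.update u k w) t = G.slotTarget Δ u t := by
  have : t / Δ ≠ k := (Nat.div_lt_of_lt_mul ht).ne
  rw [slotTarget, slotTarget, Function.update_of_ne this]

section Exploration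

variable [DecidableEq V]

def IsFrontierSlot (Δ : ℕ) (S : Finset V) (k : ℕ) (u : ℕ → V) (t : ℕ) : Prop :=
  t < Δ * k ∧ ∃ w ∈ S, w ∉ (range k).image u ∧ G.slotTarget Δ u t = some w

structure IsExploration (Δ : ℕ) (v : V) (S : Finset V) (k : ℕ) (u : ℕ → V) (s : ℕ → ℕ) :
    Prop where
  vert_zero : u 0 = v
  vert_mem : ∀ i < k, u i ∈ S
  vert_injOn : Set.InjOn u (range k)
  slot_strictMonoOn : StrictMonoOn s (Ico 1 k)
  slot_lt : ∀ j ∈ Ico 1 k, s j < Δ * j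
  slotTarget_slot : ∀ j ∈ Ico 1 k, G.slotTarget Δ u (s j) = some (u j)
  slot_lt_of_isFrontierSlot : ∀ t, G.IsFrontierSlot Δ S k u t → ∀ j ∈ Ico 1 k, s j < t

variable {Δ k : ℕ} {v : V} {S : Finset V} {u : ℕ → V} {s : ℕ → ℕ}

theorem isExploration_one (hv : v ∈ S) : G.IsExploration Δ v S 1 (fun _ => v) (fun _ => 0) where
  vert_zero := rfl
  vert_mem _ _ := hv
  vert_injOn := by simp
  slot_strictMonoOn _ ha := by simp at ha
  slot_lt := by simp
  slotTarget_slot := by simp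
  slot_lt_of_isFrontierSlot := by simp

theorem lt_of_isFrontierSlot_update {t t' : ℕ} {w : V} (ht : t < Δ * k)
    (htw : G.slotTarget Δ u t = some w) (hmin : ∀ t', G.IsFrontierSlot Δ S k u t' → t ≤ t')
    (ht' : G.IsFrontierSlot Δ S (k + 1) (Function.update u k w) t') : t < t' := by
  obtain ⟨-, w', hw'S, hw'U, ht'w'⟩ := ht'
  by_contra! ht't
  have ht'k : t' < Δ * k := ht't.trans_lt ht
  rw [slotTarget_update_of_lt u w ht'k] at ht'w'
  have hw'U' : w' ∉ (range k).image u := by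
    refine fun hw' => hw'U ?_
    obtain ⟨i, hi, rfl⟩ := mem_image.1 hw'
    exact mem_image.2 ⟨i, mem_range.2 ((mem_range.1 hi).trans k.lt_succ_self),
      Function.update_of_ne (mem_range.1 hi).ne _ _⟩
  have htt' : t = t' := le_antisymm (hmin t' ⟨ht'k, w', hw'S, hw'U', ht'w'⟩) ht't
  rw [htt', ht'w', Option.some_inj] at htw
  exact hw'U (mem_image.2 ⟨k, self_mem_range_succ k, by simp [htw]⟩)

namespace IsExploration

theorem card_image_vert (h : G.IsExploration Δ v S k u s) : #((range k).image u) = k := by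
  rw [card_image_of_injOn h.vert_injOn, card_range]

theorem image_vert_subset (h : G.IsExploration Δ v S k u s) : (range k).image u ⊆ S := by
  simpa [subset_iff] using h.vert_mem

theorem image_vert_eq (h : G.IsExploration Δ v S k u s) (hS : #S = k) :
    (range k).image u = S :=
  eq_of_subset_of_card_le h.image_vert_subset (by rw [hS, h.card_image_vert])

theorem exists_isFrontierSlot (h : G.IsExploration Δ v S k u s) (hdeg : ∀ x, G.degree x ≤ Δ)
    (hS : (G.induce (S : Set V)).Connected) (hk : 0 < k) (hkS : k < #S) :
    ∃ t, G.IsFrontierSlot Δ S k u t := by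
  obtain ⟨b, hbS, hbU⟩ := exists_mem_notMem_of_card_lt_card (h.card_image_vert.trans_lt hkS)
  have hvU : v ∈ (range k).image u := mem_image.2 ⟨0, mem_range.2 hk, h.vert_zero⟩
  obtain ⟨x, hxU, w, hwS, hwU, hxw⟩ := exists_adj_of_induce_connected hS
    (coe_subset.2 h.image_vert_subset) (mem_coe.2 hvU) hbS (mt mem_coe.1 hbU)
  obtain ⟨i, hi, rfl⟩ := mem_image.1 (mem_coe.1 hxU)
  obtain ⟨t, ht, htw⟩ := exists_slotTarget_eq_some hdeg hxw
  exact ⟨t, ht.trans_le (Nat.mul_le_mul_left _ (mem_range.1 hi)), w, hwS, hwU, htw⟩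

theorem extend (h : G.IsExploration Δ v S k u s) (hk : 0 < k) {t : ℕ} {w : V}
    (ht : t < Δ * k) (hwS : w ∈ S) (hwU : w ∉ (range k).image u)
    (htw : G.slotTarget Δ u t = some w) (hmin : ∀ t', G.IsFrontierSlot Δ S k u t' → t ≤ t') :
    G.IsExploration Δ v S (k + 1) (Function.update u k w) (Function.update s k t) := by
  have hu : ∀ i < k, Function.update u k w i = u i := fun _ hi => Function.update_of_ne hi.ne _ _
  have hs : ∀ i < k, Function.update s k t i = s i := fun _ hi => Function.update_of_ne hi.ne _ _
  have hIco : ∀ j ∈ Ico 1 (k + 1), j ∈ Ico 1 k ∨ j = k := by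
    intro j hj
    simp only [mem_Ico] at hj ⊢
    omega
  have hslot_lt_t : ∀ j ∈ Ico 1 k, s j < t :=
    h.slot_lt_of_isFrontierSlot t ⟨ht, w, hwS, hwU, htw⟩
  refine ⟨by rw [hu 0 hk, h.vert_zero], fun i hi => ?_, ?_, ?_, fun j hj => ?_, fun j hj => ?_,
    fun t' ht' j hj => ?_⟩
  · rcases Nat.lt_succ_iff_lt_or_eq.1 hi with hi | rfl
    · rw [hu i hi]
      exact h.vert_mem i hi
    · simpa using hwS
  · rw [range_add_one, coe_insert, Set.injOn_insert (by simp)]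
    refine ⟨h.vert_injOn.congr fun i hi => (hu i (mem_range.1 hi)).symm, ?_⟩
    rw [Set.image_congr fun i hi => hu i (mem_range.1 hi), ← coe_image]
    simpa using hwU
  · intro a ha b hb hab
    have ha' : a ∈ Ico 1 k := by
      simp only [coe_Ico, Set.mem_Ico] at ha hb
      simp only [mem_Ico]
      omega
    rw [hs a (mem_Ico.1 ha').2]
    rcases hIco b hb with hb | rfl
    · rw [hs b (mem_Ico.1 hb).2]
      exact h.slot_strictMonoOn ha' hb hab
    · simpa using hslot_lt_t a ha'
  · rcases hIco j hj with hj | rfl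
    · rw [hs j (mem_Ico.1 hj).2]
      exact h.slot_lt j hj
    · simpa using ht
  · rcases hIco j hj with hj | rfl
    · have hjk := (mem_Ico.1 hj).2
      rw [hs j hjk, hu j hjk, slotTarget_update_of_lt u w
        ((h.slot_lt j hj).trans_le (Nat.mul_le_mul_left _ hjk.le))]
      exact h.slotTarget_slot j hj
    · simpa [slotTarget_update_of_lt u w ht] using htw
  · have htt' := lt_of_isFrontierSlot_update ht htw hmin ht'
    rcases hIco j hj with hj | rfl
    · rw [hs j (mem_Ico.1 hj).2]
      exact (hslot_lt_t j hj).trans htt'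
    · simpa using htt'

theorem eqOn_vert {S' : Finset V} {u' : ℕ → V} {s' : ℕ → ℕ} (h : G.IsExploration Δ v S k u s)
    (h' : G.IsExploration Δ v S' k u' s') (hs : Set.EqOn s s' (Ico 1 k)) :
    ∀ j < k, u j = u' j := by
  intro j
  induction j using Nat.strong_induction_on with
  | _ j ih =>
  intro hj
  rcases Nat.eq_zero_or_pos j with rfl | hj0
  · rw [h.vert_zero, h'.vert_zero]
  have hjI : j ∈ Ico 1 k := mem_Ico.2 ⟨hj0, hj⟩
  have hparent : s j / Δ < j := Nat.div_lt_of_lt_mul (h.slot_lt j hjI)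
  apply Option.some_injective
  rw [← h.slotTarget_slot j hjI, ← h'.slotTarget_slot j hjI, ← hs hjI, slotTarget, slotTarget,
    ih _ hparent (hparent.trans hj)]

theorem image_slot_mem_powersetCard (h : G.IsExploration Δ v S k u s) :
    (Ico 1 k).image s ∈ powersetCard (k - 1) (range (Δ * (k - 1))) := by
  refine mem_powersetCard.2 ⟨fun t ht => ?_, ?_⟩
  · obtain ⟨j, hj, rfl⟩ := mem_image.1 ht
    exact mem_range.2 ((h.slot_lt j hj).trans_le
      (Nat.mul_le_mul_left _ (by simp only [mem_Ico] at hj; omega)))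
  · rw [card_image_of_injOn h.slot_strictMonoOn.injOn, Nat.card_Ico]

theorem eq_of_image_slot_eq {S' : Finset V} {u' : ℕ → V} {s' : ℕ → ℕ}
    (h : G.IsExploration Δ v S k u s) (h' : G.IsExploration Δ v S' k u' s') (hS : #S = k)
    (hS' : #S' = k) (himage : (Ico 1 k).image s = (Ico 1 k).image s') : S = S' := by
  have hs : Set.EqOn s s' (Ico 1 k) := h.slot_strictMonoOn.eqOn_of_image_eq
    h'.slot_strictMonoOn (by rw [← coe_image, himage, coe_image])
  rw [← h.image_vert_eq hS, ← h'.image_vert_eq hS']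
  exact image_congr fun j hj => h.eqOn_vert h' hs j (mem_range.1 hj)

end IsExploration

theorem exists_isExploration (hdeg : ∀ x, G.degree x ≤ Δ)
    (hS : (G.induce (S : Set V)).Connected) (hv : v ∈ S) : ∃ u s, G.IsExploration Δ v S #S u s := by
  classical
  suffices ∀ k, 1 ≤ k → k ≤ #S → ∃ u s, G.IsExploration Δ v S k u s from
    this _ (card_pos.2 ⟨v, hv⟩) le_rfl
  intro k hk hkS
  induction k, hk using Nat.le_induction with
  | base => exact ⟨_, _, isExploration_one hv⟩
  | succ k hk ih =>
    obtain ⟨u, s, h⟩ := ih (by omega)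
    have hex := h.exists_isFrontierSlot hdeg hS hk (by omega)
    obtain ⟨ht, w, hwS, hwU, htw⟩ := Nat.find_spec hex
    exact ⟨_, _, h.extend hk ht hwS hwU htw fun t' => Nat.find_min' hex⟩

end Exploration

theorem ncard_connected_le_choose {Δ : ℕ} (hdeg : ∀ x, G.degree x ≤ Δ) (v : V) (ℓ : ℕ) :
    {S : Finset V | v ∈ S ∧ #S = ℓ ∧ (G.induce (S : Set V)).Connected}.ncard ≤
      (Δ * (ℓ - 1)).choose (ℓ - 1) := by
  classical
  have hex : ∀ S ∈ {S : Finset V | v ∈ S ∧ #S = ℓ ∧ (G.induce (S : Set V)).Connected},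
      ∃ u s, G.IsExploration Δ v S ℓ u s := by
    rintro S ⟨hv, rfl, hS⟩
    exact exists_isExploration hdeg hS hv
  choose! u s hexpl using hex
  calc _ ≤ (powersetCard (ℓ - 1) (range (Δ * (ℓ - 1))) : Set (Finset ℕ)).ncard :=
        Set.ncard_le_ncard_of_injOn (fun S => (Ico 1 ℓ).image (s S))
          (fun S hS => (hexpl S hS).image_slot_mem_powersetCard)
          (fun S hS S' hS' he =>
            (hexpl S hS).eq_of_image_slot_eq (hexpl S' hS') hS.2.1 hS'.2.1 he)
    _ = _ := by rw [Set.ncard_coe_finset, card_powersetCard, card_range]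

end SimpleGraph

theorem Nat.cast_choose_mul_le_exp_mul_pow (D k : ℕ) :
    ((D * k).choose k : ℝ) ≤ (Real.exp 1 * D) ^ k :=
  calc ((D * k).choose k : ℝ) ≤ ((D * k : ℕ) ^ k : ℝ) / k.factorial :=
        Nat.choose_le_pow_div k (D * k)
    _ = (D : ℝ) ^ k * ((k : ℝ) ^ k / k.factorial) := by push_cast; ring
    _ ≤ (D : ℝ) ^ k * Real.exp k := by
        gcongr
        exact Real.pow_div_factorial_le_exp _ k.cast_nonneg k
    _ = (Real.exp 1 * D) ^ k := by rw [mul_pow, ← Real.exp_nat_mul, mul_one, mul_comm]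

theorem stmt_8_general {V : Type*} [Fintype V] (G : SimpleGraph V)
    [DecidableRel G.Adj] (Δ : ℕ)
    (hdeg : ∀ w : V, G.degree w ≤ Δ) (v : V) (ℓ : ℕ) :
    (({S : Finset V | v ∈ S ∧ S.card = ℓ ∧
        (G.induce (S : Set V)).Connected} : Set (Finset V)).ncard : ℝ) ≤
      (Real.exp 1 * Δ) ^ (ℓ - 1) :=
  calc _ ≤ ((Δ * (ℓ - 1)).choose (ℓ - 1) : ℝ) := by
        exact_mod_cast G.ncard_connected_le_choose hdeg v ℓ
    _ ≤ _ := Nat.cast_choose_mul_le_exp_mul_pow Δ (ℓ - 1)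

/-- In a finite graph of maximum degree at most `Δ ≥ 1`, the number of vertex
subsets of size `ℓ` containing a fixed vertex `v` that induce a connected
subgraph is at most `(e·Δ)^{ℓ−1}`. -/
theorem stmt_8 {V : Type*} [Fintype V] [DecidableEq V] (G : SimpleGraph V)
    [DecidableRel G.Adj] (Δ : ℕ) (hΔ : 1 ≤ Δ)
    (hdeg : ∀ w : V, G.degree w ≤ Δ) (v : V) (ℓ : ℕ) (hℓ : 1 ≤ ℓ) :
    (({S : Finset V | v ∈ S ∧ S.card = ℓ ∧
        (G.induce (S : Set V)).Connected} : Set (Finset V)).ncard : ℝ) ≤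
      (Real.exp 1 * Δ) ^ (ℓ - 1) :=
  stmt_8_general G Δ hdeg v ℓ
end

section
/- For any subset A of the even side of the hypercube Q_d with |A| ≤ 2^{d−2}, we have |N(A)| ≥ (1 + 1/(2√d))·|A|. -/
/-!
Talagrand's inequality `√2 · |A| (2ⁿ - |A|) / 2ⁿ ≤ ∑ₓ √h_A(x)`, where `h_A(x)` counts the
directions leaving `A` at `x ∈ A`, follows by induction on `n`: splitting the cube along the
first coordinate, one application of Cauchy–Schwarz in `ℝ²` per vertex combines the bounds for
the two halves with the edges between them. Applied to the complement of `S ⊆ Q_n` with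
`|S| ≤ 2ⁿ⁻¹`, only vertices of `N(S) \ S` contribute, each at most `√n`, so
`|S| ≤ √(2n) |N(S) \ S|`.

For `A` on the even side of `Q_{n+1}`, deleting the last coordinate is injective on `A`, and
lifting `S ∪ N(S)` (with `S` the image of `A`) to the odd side injects it into `N(A)`; hence
`|N(A)| ≥ |A| + |A| / √(2n)`.
-/

open Finset

/-- The hypercube graph `Q_d` on `{0,1}^d`: two vertices are adjacent iff
their Hamming distance is `1`. -/
def cubeGraph (d : ℕ) : SimpleGraph (Fin d → Bool) where
  Adj u v := hammingDist u v = 1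
  symm := ⟨fun u v (h : hammingDist u v = 1) => show hammingDist v u = 1 by rwa [hammingDist_comm]⟩
  loopless := ⟨fun u (h : hammingDist u u = 1) => by simp [hammingDist_self] at h⟩

instance (d : ℕ) : DecidableRel (cubeGraph d).Adj := fun u v =>
  inferInstanceAs (Decidable (hammingDist u v = 1))

/-- Hamming weight of a vertex of the hypercube. -/
def hammingWeight {d : ℕ} (u : Fin d → Bool) : ℕ :=
  hammingDist u (fun _ => false)

/-- The neighbourhood of a set of vertices of the hypercube. -/
def cubeNbhd {d : ℕ} (A : Finset (Fin d → Bool)) : Finset (Fin d → Bool) :=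
  A.biUnion fun x => (cubeGraph d).neighborFinset x

def flipBit {n : ℕ} (i : Fin n) (x : Fin n → Bool) : Fin n → Bool :=
  Function.update x i (!x i)

lemma hammingDist_flipBit {n : ℕ} (i : Fin n) (x : Fin n → Bool) :
    hammingDist (flipBit i x) x = 1 := by
  rw [hammingDist, card_eq_one]
  refine ⟨i, ?_⟩
  ext j
  by_cases hj : j = i <;> simp [flipBit, Function.update_apply, hj]

lemma flipBit_cons_zero {n : ℕ} (b : Bool) (x : Fin n → Bool) :
    flipBit 0 (Fin.cons b x) = Fin.cons (!b) x := by
  simp [flipBit, Fin.update_cons_zero]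

lemma flipBit_cons_succ {n : ℕ} (b : Bool) (x : Fin n → Bool) (i : Fin n) :
    flipBit i.succ (Fin.cons b x) = Fin.cons b (flipBit i x) := by
  simp [flipBit, Fin.cons_update]

/-- Talagrand's `h_A(x)`. -/
def boundaryDegree {n : ℕ} (A : Finset (Fin n → Bool)) (x : Fin n → Bool) : ℕ :=
  #{i | x ∈ A ∧ flipBit i x ∉ A}

lemma boundaryDegree_le {n : ℕ} (A : Finset (Fin n → Bool)) (x : Fin n → Bool) :
    boundaryDegree A x ≤ n :=
  (card_le_univ _).trans_eq (Fintype.card_fin n)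

def cubeSlice {n : ℕ} (A : Finset (Fin (n + 1) → Bool)) (b : Bool) : Finset (Fin n → Bool) :=
  {x | Fin.cons b x ∈ A}

@[simp]
lemma mem_cubeSlice {n : ℕ} {A : Finset (Fin (n + 1) → Bool)} {b : Bool} {x : Fin n → Bool} :
    x ∈ cubeSlice A b ↔ Fin.cons b x ∈ A := by
  simp [cubeSlice]

lemma boundaryDegree_cons {n : ℕ} (A : Finset (Fin (n + 1) → Bool)) (b : Bool)
    (x : Fin n → Bool) :
    boundaryDegree A (Fin.cons b x) =
      (if x ∈ cubeSlice A b \ cubeSlice A (!b) then 1 else 0) +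
        boundaryDegree (cubeSlice A b) x := by
  rw [boundaryDegree, boundaryDegree, card_filter, card_filter, Fin.sum_univ_succ]
  simp [flipBit_cons_zero, flipBit_cons_succ]

lemma sum_fun_fin_succ {α M : Type*} [Fintype α] [AddCommMonoid M] {n : ℕ}
    (f : (Fin (n + 1) → α) → M) :
    ∑ z, f z = ∑ a, ∑ x : Fin n → α, f (Fin.cons a x) := by
  rw [← (Fin.consEquiv fun _ => α).sum_comp, Fintype.sum_prod_type]
  rfl

lemma card_eq_card_cubeSlice_add {n : ℕ} (A : Finset (Fin (n + 1) → Bool)) :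
    #A = #(cubeSlice A false) + #(cubeSlice A true) := by
  have h := sum_fun_fin_succ fun z => if z ∈ A then 1 else 0
  simpa [sum_boole, cubeSlice, Fintype.sum_bool, add_comm] using h

lemma mul_sqrt_add_mul_sqrt_le (X Y : ℝ) {a e : ℝ} (ha : 0 ≤ a) (he : 0 ≤ e) :
    X * √a + Y * √e ≤ √(X ^ 2 + Y ^ 2) * √(a + e) := by
  rw [← Real.sqrt_mul (by positivity)]
  refine (le_abs_self _).trans (Real.abs_le_sqrt ?_)
  nlinarith [sq_nonneg (X * √e - Y * √a), Real.sq_sqrt ha, Real.sq_sqrt he]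

/-- Talagrand's lower bound for a set of size `a` in a cube with `N` vertices. -/
noncomputable def talagrandBound (N a : ℝ) : ℝ :=
  √2 * (a * (N - a) / N)

lemma talagrandBound_nonneg {N a : ℝ} (ha : 0 ≤ a) (haN : a ≤ N) : 0 ≤ talagrandBound N a :=
  mul_nonneg (Real.sqrt_nonneg 2)
    (div_nonneg (mul_nonneg ha (sub_nonneg.2 haN)) (ha.trans haN))

lemma talagrandBound_two_mul_add_sq_le {N : ℝ} (hN : 0 < N) (a₀ a₁ : ℝ) :
    talagrandBound (2 * N) (a₀ + a₁) ^ 2 ≤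
      (talagrandBound N a₀ + talagrandBound N a₁) ^ 2 + (a₀ - a₁) ^ 2 := by
  unfold talagrandBound
  rw [← sub_nonneg]
  have key : (√2 * (a₀ * (N - a₀) / N) + √2 * (a₁ * (N - a₁) / N)) ^ 2 + (a₀ - a₁) ^ 2 -
      (√2 * ((a₀ + a₁) * (2 * N - (a₀ + a₁)) / (2 * N))) ^ 2 =
      ((a₀ - a₁) ^ 2 * (N - a₀ - a₁) ^ 2 + (a₀ - a₁) ^ 4 / 2) / N ^ 2 := by
    field_simp
    rw [Real.sq_sqrt zero_le_two]
    ring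
  rw [key]
  positivity

lemma abs_card_sub_card_le {α : Type*} [DecidableEq α] (s t : Finset α) :
    |(#s : ℝ) - #t| ≤ #(s \ t) + #(t \ s) := by
  have hs := card_sdiff_add_card_inter s t
  have ht := card_sdiff_add_card_inter t s
  rw [inter_comm] at ht
  rw [abs_le, ← hs, ← ht]
  push_cast
  constructor <;> linarith

lemma mul_sum_sqrt_boundaryDegree_cubeSlice_add_le {n : ℕ} (A : Finset (Fin (n + 1) → Bool))
    (b : Bool) (X Y : ℝ) :
    X * ∑ x, √(boundaryDegree (cubeSlice A b) x : ℝ) +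
        Y * #(cubeSlice A b \ cubeSlice A (!b)) ≤
      √(X ^ 2 + Y ^ 2) * ∑ x, √(boundaryDegree A (Fin.cons b x) : ℝ) := by
  have hcard : (#(cubeSlice A b \ cubeSlice A (!b)) : ℝ) =
      ∑ x, if x ∈ cubeSlice A b \ cubeSlice A (!b) then 1 else 0 := by
    simp only [sum_ite_mem, univ_inter, sum_const, nsmul_eq_mul, mul_one]
  rw [hcard, mul_sum, mul_sum, mul_sum, ← sum_add_distrib]
  gcongr with x
  have hh : (0 : ℝ) ≤ boundaryDegree (cubeSlice A b) x := Nat.cast_nonneg _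
  rw [boundaryDegree_cons]
  split_ifs
  · simpa [add_comm] using mul_sqrt_add_mul_sqrt_le X Y hh zero_le_one
  · simpa using mul_sqrt_add_mul_sqrt_le X Y hh le_rfl

lemma sqrt_sq_add_sq_le_sum_sqrt_boundaryDegree {n : ℕ} (A : Finset (Fin (n + 1) → Bool))
    {X Y : ℝ} (hX : 0 ≤ X) (hY : 0 ≤ Y)
    (hXle : X ≤ ∑ x, √(boundaryDegree (cubeSlice A false) x : ℝ) +
      ∑ x, √(boundaryDegree (cubeSlice A true) x : ℝ))
    (hYle : Y ≤ #(cubeSlice A false \ cubeSlice A true) +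
      #(cubeSlice A true \ cubeSlice A false)) :
    √(X ^ 2 + Y ^ 2) ≤ ∑ z, √(boundaryDegree A z : ℝ) := by
  rw [sum_fun_fin_succ, Fintype.sum_bool]
  set R := √(X ^ 2 + Y ^ 2)
  have hR : R * R = X * X + Y * Y := by
    rw [Real.mul_self_sqrt (by positivity)]
    ring
  have hRF : R * R ≤ R * (∑ x, √(boundaryDegree A (Fin.cons true x) : ℝ) +
      ∑ x, √(boundaryDegree A (Fin.cons false x) : ℝ)) := by
    have h₀ := mul_sum_sqrt_boundaryDegree_cubeSlice_add_le A false X Y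
    have h₁ := mul_sum_sqrt_boundaryDegree_cubeSlice_add_le A true X Y
    simp only [Bool.not_false, Bool.not_true] at h₀ h₁
    rw [hR]
    nlinarith [mul_le_mul_of_nonneg_left hXle hX, mul_le_mul_of_nonneg_left hYle hY]
  have hF₀ : 0 ≤ ∑ x, √(boundaryDegree A (Fin.cons false x) : ℝ) :=
    sum_nonneg fun _ _ => Real.sqrt_nonneg _
  have hF₁ : 0 ≤ ∑ x, √(boundaryDegree A (Fin.cons true x) : ℝ) :=
    sum_nonneg fun _ _ => Real.sqrt_nonneg _
  nlinarith [Real.sqrt_nonneg (X ^ 2 + Y ^ 2)]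

lemma card_le_two_pow {n : ℕ} (A : Finset (Fin n → Bool)) : #A ≤ 2 ^ n :=
  (card_le_univ A).trans_eq (by simp)

theorem talagrandBound_le_sum_sqrt_boundaryDegree (n : ℕ) (A : Finset (Fin n → Bool)) :
    talagrandBound (2 ^ n) #A ≤ ∑ x, √(boundaryDegree A x : ℝ) := by
  induction n with
  | zero =>
    have hA := card_le_two_pow A
    interval_cases h : #A <;> simp [talagrandBound]
  | succ n ih =>
    set a₀ : ℝ := (#(cubeSlice A false) : ℝ)
    set a₁ : ℝ := (#(cubeSlice A true) : ℝ)
    have ha : ∀ b, (#(cubeSlice A b) : ℝ) ≤ 2 ^ n := fun b => by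
      exact_mod_cast card_le_two_pow _
    have hX : 0 ≤ talagrandBound (2 ^ n) a₀ + talagrandBound (2 ^ n) a₁ :=
      add_nonneg (talagrandBound_nonneg (by positivity) (ha false))
        (talagrandBound_nonneg (by positivity) (ha true))
    calc talagrandBound (2 ^ (n + 1)) #A = talagrandBound (2 * 2 ^ n) (a₀ + a₁) := by
          rw [card_eq_card_cubeSlice_add, pow_succ']
          push_cast
          rfl
      _ ≤ √((talagrandBound (2 ^ n) a₀ + talagrandBound (2 ^ n) a₁) ^ 2 + |a₀ - a₁| ^ 2) := by
          refine (le_abs_self _).trans (Real.abs_le_sqrt ?_)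
          rw [sq_abs]
          exact talagrandBound_two_mul_add_sq_le (by positivity) _ _
      _ ≤ ∑ x, √(boundaryDegree A x : ℝ) :=
          sqrt_sq_add_sq_le_sum_sqrt_boundaryDegree A hX (abs_nonneg _)
            (add_le_add (ih _) (ih _)) (abs_card_sub_card_le _ _)

lemma mem_cubeNbhd {n : ℕ} {S : Finset (Fin n → Bool)} {v : Fin n → Bool} :
    v ∈ cubeNbhd S ↔ ∃ u ∈ S, hammingDist u v = 1 := by
  simp only [cubeNbhd, mem_biUnion, SimpleGraph.mem_neighborFinset]
  rfl

lemma boundaryDegree_compl_eq_zero {n : ℕ} {S : Finset (Fin n → Bool)} {x : Fin n → Bool}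
    (hx : x ∉ cubeNbhd S \ S) : boundaryDegree Sᶜ x = 0 := by
  rw [boundaryDegree, card_eq_zero, filter_eq_empty_iff]
  rintro i - ⟨hxS, hiS⟩
  have hxN : x ∈ cubeNbhd S :=
    mem_cubeNbhd.2 ⟨flipBit i x, by simpa using hiS, hammingDist_flipBit i x⟩
  exact hx (mem_sdiff.2 ⟨hxN, by simpa using hxS⟩)

lemma sum_sqrt_boundaryDegree_compl_le {n : ℕ} (S : Finset (Fin n → Bool)) :
    ∑ x, √(boundaryDegree Sᶜ x : ℝ) ≤ √n * #(cubeNbhd S \ S) := by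
  calc ∑ x, √(boundaryDegree Sᶜ x : ℝ)
      = ∑ x ∈ cubeNbhd S \ S, √(boundaryDegree Sᶜ x : ℝ) :=
        (sum_subset (subset_univ _) fun x _ hx => by
          simp [boundaryDegree_compl_eq_zero hx]).symm
    _ ≤ ∑ x ∈ cubeNbhd S \ S, √(n : ℝ) :=
        sum_le_sum fun x _ => Real.sqrt_le_sqrt (by exact_mod_cast boundaryDegree_le _ _)
    _ = √n * #(cubeNbhd S \ S) := by rw [sum_const, nsmul_eq_mul, mul_comm]

theorem card_le_sqrt_mul_card_cubeNbhd_sdiff {n : ℕ} (S : Finset (Fin n → Bool))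
    (hS : 2 * #S ≤ 2 ^ n) :
    (#S : ℝ) ≤ √(2 * n) * #(cubeNbhd S \ S) := by
  have hcompl : (#Sᶜ : ℝ) = 2 ^ n - #S := by
    rw [card_compl, Fintype.card_fun, Fintype.card_bool, Fintype.card_fin,
      Nat.cast_sub (card_le_two_pow S)]
    push_cast
    rfl
  have hS' : 2 * (#S : ℝ) ≤ 2 ^ n := by exact_mod_cast hS
  have hlow : √2 * (#S / 2) ≤ talagrandBound (2 ^ n) #Sᶜ := by
    rw [talagrandBound, hcompl, sub_sub_cancel]
    refine mul_le_mul_of_nonneg_left ?_ (Real.sqrt_nonneg 2)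
    rw [le_div_iff₀ (by positivity)]
    nlinarith [(#S).cast_nonneg (α := ℝ)]
  calc (#S : ℝ) = √2 * (√2 * (#S / 2)) := by
        rw [← mul_assoc, Real.mul_self_sqrt zero_le_two]
        ring
    _ ≤ √2 * (√n * #(cubeNbhd S \ S)) := by
        refine mul_le_mul_of_nonneg_left (hlow.trans ?_) (Real.sqrt_nonneg 2)
        exact (talagrandBound_le_sum_sqrt_boundaryDegree n Sᶜ).trans
          (sum_sqrt_boundaryDegree_compl_le S)
    _ = √(2 * n) * #(cubeNbhd S \ S) := by
        rw [Real.sqrt_mul zero_le_two]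
        ring

lemma hammingDist_eq_hammingDist_init_add {n : ℕ} (u v : Fin (n + 1) → Bool) :
    hammingDist u v = hammingDist (Fin.init u) (Fin.init v) +
      if u (Fin.last n) = v (Fin.last n) then 0 else 1 := by
  rw [hammingDist, hammingDist, card_filter, card_filter, Fin.sum_univ_castSucc]
  congr 1
  split_ifs <;> simp_all

lemma hammingDist_le_hammingDist_init_add_one {n : ℕ} (u v : Fin (n + 1) → Bool) :
    hammingDist u v ≤ hammingDist (Fin.init u) (Fin.init v) + 1 := by
  rw [hammingDist_eq_hammingDist_init_add]
  split_ifs <;> omega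

lemma even_hammingWeight_add_hammingWeight_add_hammingDist {n : ℕ} (x y : Fin n → Bool) :
    Even (hammingWeight x + hammingWeight y + hammingDist x y) := by
  simp only [hammingWeight, hammingDist, card_filter, ← sum_add_distrib]
  refine even_sum _ fun i _ => ?_
  cases x i <;> cases y i <;> decide

lemma hammingDist_eq_one_of_even_of_odd {n : ℕ} {u v : Fin (n + 1) → Bool}
    (hu : Even (hammingWeight u)) (hv : Odd (hammingWeight v))
    (h : hammingDist (Fin.init u) (Fin.init v) ≤ 1) : hammingDist u v = 1 := by
  have hpar := even_hammingWeight_add_hammingWeight_add_hammingDist u v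
  have hle := hammingDist_le_hammingDist_init_add_one u v
  rw [Nat.even_iff] at hu hpar
  rw [Nat.odd_iff] at hv
  omega

lemma injOn_init_of_even {n : ℕ} {A : Finset (Fin (n + 1) → Bool)}
    (hA : ∀ u ∈ A, Even (hammingWeight u)) :
    Set.InjOn Fin.init (A : Set (Fin (n + 1) → Bool)) := by
  intro u hu v hv huv
  have hpar := even_hammingWeight_add_hammingWeight_add_hammingDist u v
  have hle := hammingDist_le_hammingDist_init_add_one u v
  have hu := hA u hu
  have hv := hA v hv
  rw [huv, hammingDist_self] at hle
  rw [← hammingDist_eq_zero]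
  rw [Nat.even_iff] at hu hv hpar
  omega

/-- The vertex of odd weight in the fibre of `Fin.init` over `y`. -/
def oddLift {n : ℕ} (y : Fin n → Bool) : Fin (n + 1) → Bool :=
  Fin.snoc y (decide (Even (hammingWeight y)))

lemma init_oddLift {n : ℕ} (y : Fin n → Bool) : Fin.init (oddLift y) = y :=
  Fin.init_snoc _ _

lemma odd_hammingWeight_oddLift {n : ℕ} (y : Fin n → Bool) :
    Odd (hammingWeight (oddLift y)) := by
  have h := hammingDist_eq_hammingDist_init_add (oddLift y) (fun _ => false)
  rw [init_oddLift] at h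
  change hammingWeight (oddLift y) = hammingWeight y + _ at h
  rw [h]
  rcases Nat.even_or_odd (hammingWeight y) with hy | hy
  · simp [oddLift, hy]
  · simp [oddLift, hy, Nat.not_even_iff_odd.2 hy]

lemma card_cubeNbhd_image_init_union_le {n : ℕ} {A : Finset (Fin (n + 1) → Bool)}
    (hA : ∀ u ∈ A, Even (hammingWeight u)) :
    #(cubeNbhd (A.image Fin.init) ∪ A.image Fin.init) ≤ #(cubeNbhd A) := by
  refine card_le_card_of_injOn oddLift (fun y hy => ?_) fun y _ z _ h => by
    simpa [init_oddLift] using congrArg Fin.init h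
  obtain ⟨u, hu, hle⟩ : ∃ u ∈ A, hammingDist (Fin.init u) y ≤ 1 := by
    rcases mem_union.1 hy with hy | hy
    · obtain ⟨s, hs, hsy⟩ := mem_cubeNbhd.1 hy
      obtain ⟨u, hu, rfl⟩ := mem_image.1 hs
      exact ⟨u, hu, hsy.le⟩
    · obtain ⟨u, hu, rfl⟩ := mem_image.1 hy
      exact ⟨u, hu, by simp⟩
  refine mem_cubeNbhd.2 ⟨u, hu, hammingDist_eq_one_of_even_of_odd (hA u hu)
    (odd_hammingWeight_oddLift y) ?_⟩
  rwa [init_oddLift]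

/-- For `d` sufficiently large, any subset `A` of the even side of `Q_d` with
`|A| ≤ 2^{d−2}` satisfies `|N(A)| ≥ (1 + 1/(2√d))·|A|`. -/
theorem stmt_11 :
    ∃ d₀ : ℕ, ∀ d : ℕ, d₀ ≤ d → ∀ A : Finset (Fin d → Bool),
      (∀ u ∈ A, Even (hammingWeight u)) → A.card ≤ 2 ^ (d - 2) →
      (1 + 1 / (2 * Real.sqrt d)) * A.card ≤ ((cubeNbhd A).card : ℝ) := by
  refine ⟨2, fun d hd A hA hcard => ?_⟩
  obtain ⟨n, rfl⟩ : ∃ n, d = n + 1 := ⟨d - 1, by omega⟩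
  set S := A.image Fin.init
  have hSA : #S = #A := card_image_of_injOn (injOn_init_of_even hA)
  have hS : 2 * #S ≤ 2 ^ n := by
    have h2 : 2 * 2 ^ (n + 1 - 2) = 2 ^ n := by
      rw [← pow_succ']
      congr 1
      omega
    omega
  have hNA : (#S : ℝ) + #(cubeNbhd S \ S) ≤ #(cubeNbhd A) := by
    rw [add_comm]
    exact_mod_cast (card_sdiff_add_card _ _).trans_le (card_cubeNbhd_image_init_union_le hA)
  have hsqrt : √(2 * n) ≤ 2 * √(n + 1 : ℝ) := by
    rw [Real.sqrt_le_iff, mul_pow, Real.sq_sqrt (by positivity)]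
    constructor <;> [positivity; linarith]
  have hbdry : (#S : ℝ) / (2 * √(n + 1 : ℝ)) ≤ #(cubeNbhd S \ S) := by
    rw [div_le_iff₀ (by positivity), mul_comm]
    exact (card_le_sqrt_mul_card_cubeNbhd_sdiff S hS).trans
      (mul_le_mul_of_nonneg_right hsqrt (Nat.cast_nonneg _))
  push_cast
  calc (1 + 1 / (2 * √(n + 1 : ℝ))) * #A = #S + #S / (2 * √(n + 1 : ℝ)) := by rw [hSA]; ring
    _ ≤ #S + #(cubeNbhd S \ S) := add_le_add_right hbdry _
    _ ≤ #(cubeNbhd A) := hNA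
end
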